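/- arXiv:1709.06062 — 2 statements merged into one kernel-verified Lean document; each statement's English description precedes it below -/
import Mathlib

section
/- Uniqueness propagation forces definability: suppose Q is a class forcing notion definable in a model N of ZFC with a definable forcing relation, and X is a class such that in every forcing extension of N by Q, X is the unique class satisfying a fixed first-order property ψ (with parameters from N). If some condition q forces that a definable class (defined by a formula χ) satisfies ψ, then for every instance x, x ∈ X holds iff some r ≤ q forces χ(x̌); hence X is definable in N. -/
open FirstOrder Language

/-- The language of set theory: one binary relation symbol `∈`. -/
inductive SetLangRel : ℕ → Type
  | mem : SetLangRel 2

def setLang : FirstOrder.Language := ⟨fun _ => Empty, SetLangRel⟩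

def memStructure {M : Type*} (E : M → M → Prop) : setLang.Structure M :=
  ⟨fun f _ => Empty.elim f, fun r x => match r with | .mem => E (x 0) (x 1)⟩

/-!
Any two generic filters through `q` see the same class `X` under χ. So if `x ∈ X`, some condition
of a generic filter through `q` forces `χ(x̌)`, and a common extension of it and `q` still does;
conversely, if `r ≤ q` forces `χ(x̌)`, then a generic filter through `r` contains `q` and puts `x`
into the class defined by χ, which is `X`. The resulting description of `X` only uses `Q`, `≤`,
the forcing relation and the parameter `q`, all definable in `N`.
-/

namespace Set

variable {L : Language} {M : Type*} [L.Structure M] {A : Set M}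

theorem Definable.setOf_rel_const {α : Type*} [Finite α] {R : M → M → Prop}
    (hR : A.Definable L {f : Fin 2 → M | R (f 0) (f 1)}) (i : α) {a : M} (ha : a ∈ A) :
    A.Definable L {v : α → M | R (v i) a} := by
  have hF : A.DefinableMap L (fun v : α → M => ![v i, a]) := by
    intro j
    fin_cases j
    · exact DefinableFun.proj L
    · exact definableFun_const L α ha
  exact hR.preimage_map hF

theorem definable₁_setOf_exists_le_forces {Q : Set M} {leQ Frc : M → M → Prop}
    (hQ : A.Definable₁ L Q) (hle : A.Definable L {f : Fin 2 → M | leQ (f 0) (f 1)})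
    (hFrc : A.Definable L {f : Fin 2 → M | Frc (f 0) (f 1)}) {q : M} (hq : q ∈ A) :
    A.Definable₁ L {x | ∃ r ∈ Q, leQ r q ∧ Frc r x} := by
  let r : Fin 1 ⊕ Fin 1 := .inr 0
  have hS : A.Definable L
      {w : Fin 1 ⊕ Fin 1 → M | w r ∈ Q ∧ leQ (w r) q ∧ Frc (w r) (w (.inl 0))} :=
    (hQ.preimage_comp fun _ => r).inter <| (hle.setOf_rel_const r hq).inter <|
      hFrc.preimage_comp ![r, .inl 0]
  unfold Definable₁
  convert hS.exists_of_finite using 1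
  ext x
  exact ⟨fun ⟨s, hs⟩ => ⟨fun _ => s, hs⟩, fun ⟨u, hu⟩ => ⟨u 0, hu⟩⟩

end Set

section Forcing

variable {M Ext : Type*} {Q : Set M} {leQ Frc : M → M → Prop} {gen interp : Ext → Set M}

theorem exists_le_forces_of_mem_interp
    (hFrcdown : ∀ r s x, r ∈ Q → s ∈ Q → leQ s r → Frc r x → Frc s x)
    (hgensub : ∀ e, gen e ⊆ Q)
    (hgendir : ∀ e, ∀ p ∈ gen e, ∀ p' ∈ gen e, ∃ s ∈ gen e, leQ s p ∧ leQ s p')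
    (htruth : ∀ e x, x ∈ interp e ↔ ∃ r ∈ gen e, Frc r x)
    {e : Ext} {q x : M} (hqe : q ∈ gen e) (hx : x ∈ interp e) :
    ∃ r ∈ Q, leQ r q ∧ Frc r x := by
  obtain ⟨r, hre, hrx⟩ := (htruth e x).mp hx
  obtain ⟨s, hse, hsr, hsq⟩ := hgendir e r hre q hqe
  exact ⟨s, hgensub e hse, hsq, hFrcdown r s x (hgensub e hre) (hgensub e hse) hsr hrx⟩

theorem eq_setOf_exists_le_forces
    (hFrcdown : ∀ r s x, r ∈ Q → s ∈ Q → leQ s r → Frc r x → Frc s x)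
    (hgensub : ∀ e, gen e ⊆ Q)
    (hgendir : ∀ e, ∀ p ∈ gen e, ∀ p' ∈ gen e, ∃ s ∈ gen e, leQ s p ∧ leQ s p')
    (hgenup : ∀ e, ∀ p ∈ gen e, ∀ p' ∈ Q, leQ p p' → p' ∈ gen e)
    (hdense : ∀ r ∈ Q, ∃ e, r ∈ gen e)
    (htruth : ∀ e x, x ∈ interp e ↔ ∃ r ∈ gen e, Frc r x)
    {X : Set M} {q : M} (hq : q ∈ Q) (huniq : ∀ e, q ∈ gen e → interp e = X) :
    X = {x | ∃ r ∈ Q, leQ r q ∧ Frc r x} := by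
  ext x
  constructor
  · intro hx
    obtain ⟨e, hqe⟩ := hdense q hq
    exact exists_le_forces_of_mem_interp hFrcdown hgensub hgendir htruth hqe (huniq e hqe ▸ hx)
  · rintro ⟨r, hrQ, hrq, hrx⟩
    obtain ⟨e, hre⟩ := hdense r hrQ
    rw [← huniq e (hgenup e r hre q hq hrq)]
    exact (htruth e x).mpr ⟨r, hre, hrx⟩

end Forcing

theorem uniqueness_propagation_forces_definability
    {M : Type*} (E : M → M → Prop)
    -- the class forcing notion `Q`, definable in `N` with definable order
    (Q : Set M) (leQ : M → M → Prop)
    (hQdef : letI := memStructure E;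
      (Set.univ : Set M).Definable setLang {f : Fin 1 → M | f 0 ∈ Q})
    (hleQdef : letI := memStructure E;
      (Set.univ : Set M).Definable setLang {f : Fin 2 → M | leQ (f 0) (f 1)})
    -- the forcing relation `Frc r x`, i.e. `r ⊩ χ(x̌)`, definable in `N`
    (Frc : M → M → Prop)
    (hFrcdef : letI := memStructure E;
      (Set.univ : Set M).Definable setLang {f : Fin 2 → M | Frc (f 0) (f 1)})
    (hFrcdown : ∀ r s x, r ∈ Q → s ∈ Q → leQ s r → Frc r x → Frc s x)
    -- the generic extensions: generic filters and the class defined by χ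
    {Ext : Type*} (gen : Ext → Set M) (interp : Ext → Set M)
    (hgensub : ∀ e, gen e ⊆ Q)
    (hgendir : ∀ e, ∀ p ∈ gen e, ∀ p' ∈ gen e, ∃ s ∈ gen e, leQ s p ∧ leQ s p')
    (hgenup : ∀ e, ∀ p ∈ gen e, ∀ p' ∈ Q, leQ p p' → p' ∈ gen e)
    (hdense : ∀ r ∈ Q, ∃ e, r ∈ gen e)
    -- truth lemma for the formula χ
    (htruth : ∀ e x, x ∈ interp e ↔ ∃ r ∈ gen e, Frc r x)
    -- the condition `q` forces that χ defines a class satisfying ψ; since `X`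
    -- is the unique solution of ψ in every extension, in every extension
    -- containing `q` the class defined by χ is exactly `X`
    (X : Set M) (q : M) (hq : q ∈ Q)
    (huniq : ∀ e, q ∈ gen e → interp e = X) :
    (∀ x, x ∈ X ↔ ∃ r ∈ Q, leQ r q ∧ Frc r x) ∧
    (letI := memStructure E;
      (Set.univ : Set M).Definable setLang {f : Fin 1 → M | f 0 ∈ X}) := by
  let := memStructure E
  have hX := eq_setOf_exists_le_forces hFrcdown hgensub hgendir hgenup hdense htruth hq huniq
  exact ⟨fun x => Set.ext_iff.mp hX x,
    hX ▸ Set.definable₁_setOf_exists_le_forces hQdef hleQdef hFrcdef (Set.mem_univ q)⟩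
end

section
/- An Easton-support product of small forcing is Ord-c.c. when Ord is Mahlo: assume ZFC plus 'Ord is Mahlo' (every definable closed unbounded class of ordinals contains a regular cardinal, schematically). Let P = ∏_α Q_α be an Easton-support product of a definable sequence of posets with each Q_α of size less than the next coding point. Then every definable antichain of P is a set (P has the Ord-chain condition). The proof is the class analogue of the Δ-system argument showing the Easton product below a Mahlo cardinal κ is κ-c.c. -/
/- STATEMENT 19: An Easton-support product of small forcing is Ord-c.c. when
Ord is Mahlo.

"Ord is Mahlo" is rendered as: every club class of ordinals contains a regular
cardinal (the class form of the definable scheme).  `P = ∏_α Q α` is the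
Easton-support product of a sequence of posets (with top element `1 = ⊤`),
where each `Q α` has size less than the corresponding coding point `δ α`:
conditions have set-sized support which is bounded below every regular
cardinal.  Conclusion: every antichain (in the forcing sense: a pairwise
incompatible class of conditions) is a set, i.e. has small cardinality —
`P` has the Ord-chain condition.  The proof is the class analogue of the
Δ-system argument below a Mahlo cardinal. -/

/-- "Ord is Mahlo": every club class of ordinals contains a regular cardinal. -/
def OrdIsMahlo : Prop :=
  ∀ C : Set Ordinal.{0},
    (∀ o : Ordinal, ∃ c ∈ C, o < c) →                                  -- unbounded
    (∀ o : Ordinal, Order.IsSuccLimit o → (∀ b < o, ∃ c ∈ C, b < c ∧ c < o) → o ∈ C) → -- closed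
    ∃ κ ∈ C, ∃ c : Cardinal.{0}, c.IsRegular ∧ c.ord = κ

variable (Q : Ordinal.{0} → Type) [∀ α, Preorder (Q α)] [∀ α, OrderTop (Q α)]

/-- A condition of the Easton-support product `∏_α Q α`: a function with
set-sized support, whose support is moreover bounded below every regular
cardinal. -/
structure EastonProdCond : Type 1 where
  comp : ∀ α : Ordinal.{0}, Q α
  bounded : ∃ β : Ordinal, ∀ α, β ≤ α → comp α = ⊤
  easton : ∀ κ : Cardinal.{0}, κ.IsRegular →
    Cardinal.mk {α : Ordinal // α < κ.ord ∧ comp α ≠ ⊤} < Cardinal.lift.{1} κ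

instance : Preorder (EastonProdCond Q) where
  le p q := ∀ α, p.comp α ≤ q.comp α
  le_refl p α := le_refl _
  le_trans p q r h₁ h₂ α := le_trans (h₁ α) (h₂ α)

/-!
Suppose an antichain `A` is a proper class, and index injectively a part of it by the ordinals,
`ξ ↦ p ξ`. At a regular cardinal `κ` the Easton condition bounds the support of `p κ` below `κ` by
some `γ < κ`, so `κ` receives the code `(γ, p κ ↾ γ)`. There are only set-many codes with a given
`γ`, so if each code were used only boundedly often, a regular closure point of the resulting bound
function, which exists because Ord is Mahlo, would yield a contradiction. Hence some code `(γ, r)`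
is used unboundedly often; picking such `κ₁ < κ₂` with `κ₂` beyond the support of `p κ₁`, the
conditions `p κ₁` and `p κ₂` agree on `γ`, and `p κ₂` is trivial on `[γ, κ₂)`, so gluing `p κ₁`
below `κ₂` to `p κ₂` above it gives a common extension.
-/

universe u

def IsClosurePoint (g : Ordinal.{u} → Ordinal.{u}) (c : Ordinal.{u}) : Prop :=
  ∀ γ < c, g γ < c

theorem exists_isClosurePoint_gt (g : Ordinal.{u} → Ordinal.{u}) (o : Ordinal.{u}) :
    ∃ c, o < c ∧ IsClosurePoint g c := by
  let h : Ordinal.{u} → Ordinal.{u} := fun x => ⨆ γ : Set.Iio x, Order.succ (g γ)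
  refine ⟨Ordinal.nfp h (Order.succ o), (Order.lt_succ o).trans_le (Ordinal.le_nfp h _),
    fun γ hγ => ?_⟩
  obtain ⟨n, hn⟩ := Ordinal.lt_nfp_iff.1 hγ
  calc g γ < Order.succ (g γ) := Order.lt_succ _
    _ ≤ h (h^[n] (Order.succ o)) :=
        Ordinal.le_iSup (fun γ : Set.Iio _ => Order.succ (g γ)) ⟨γ, hn⟩
    _ = h^[n + 1] (Order.succ o) := (Function.iterate_succ_apply' h n _).symm
    _ ≤ Ordinal.nfp h (Order.succ o) := Ordinal.iterate_le_nfp h _ _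

theorem OrdIsMahlo.exists_isRegular_isClosurePoint (hM : OrdIsMahlo)
    (g : Ordinal.{0} → Ordinal.{0}) : ∃ c : Cardinal.{0}, c.IsRegular ∧ IsClosurePoint g c.ord := by
  obtain ⟨_, hC, c, hc, rfl⟩ := hM {c | IsClosurePoint g c}
    (fun o => (exists_isClosurePoint_gt g o).imp fun _ h => ⟨h.2, h.1⟩)
    (fun _ _ hclosed γ hγ =>
      let ⟨_, hc, hγc, hco⟩ := hclosed γ hγ
      (hc γ hγc).trans hco)
  exact ⟨c, hc, hC⟩

/-- Fodor's lemma for the class of regular cardinals; read `X γ r κ` as "`κ` carries the code `r`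
of length `γ`". -/
theorem OrdIsMahlo.exists_code_unbounded (hM : OrdIsMahlo) {R : Ordinal.{0} → Type u}
    [∀ γ, Small.{0} (R γ)] (X : ∀ γ, R γ → Ordinal.{0} → Prop)
    (hX : ∀ c : Cardinal.{0}, c.IsRegular → ∃ γ < c.ord, ∃ r, X γ r c.ord) :
    ∃ γ r, ∀ o, ∃ κ, o < κ ∧ X γ r κ := by
  by_contra! hbounded
  choose b hb using hbounded
  obtain ⟨c, hc, hcl⟩ := hM.exists_isRegular_isClosurePoint fun γ => ⨆ r, b γ r
  obtain ⟨γ, hγ, r, hr⟩ := hX c hc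
  exact hb γ r c.ord ((Ordinal.le_iSup _ r).trans_lt (hcl γ hγ)) hr

theorem nonempty_ordinal_embedding_of_not_small (α : Type (u + 1)) (h : ¬ Small.{u} α) :
    Nonempty (Ordinal.{u} ↪ α) := by
  have hle : Cardinal.univ.{u, u + 1} ≤ Cardinal.lift.{u + 1} (Cardinal.mk α) :=
    le_of_not_gt fun hlt => h (Cardinal.small_iff_lift_mk_lt_univ.mpr hlt)
  rw [Cardinal.lift_id, ← Cardinal.mk_ordinal] at hle
  exact (Cardinal.le_def _ _).mp hle

namespace EastonProdCond

variable {Q}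

theorem exists_support_bound (p : EastonProdCond Q) {κ : Cardinal.{0}} (hκ : κ.IsRegular) :
    ∃ γ < κ.ord, ∀ α, γ ≤ α → α < κ.ord → p.comp α = ⊤ := by
  let s : Set Ordinal.{0} := {α | α < κ.ord ∧ p.comp α ≠ ⊤}
  have hs : Cardinal.mk s < (Ordinal.lift.{1} κ.ord).cof := by
    rw [← Ordinal.lift_cof, hκ.cof_ord]
    exact p.easton κ hκ
  refine ⟨_, Ordinal.sSup_add_one_lt_of_lt_cof hs fun α hα => hα.1, fun α hγα hακ => ?_⟩
  by_contra hα
  have : Small.{0} s := small_subset (s := Set.Iio κ.ord) (t := s) fun _ => And.left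
  have hbdd : BddAbove ((· + 1) '' s) := Ordinal.bddAbove_of_small
  have : α + 1 ≤ α := (le_csSup hbdd ⟨α, ⟨hακ, hα⟩, rfl⟩).trans hγα
  exact (Order.lt_succ α).not_ge this

noncomputable def glue (p q : EastonProdCond Q) (κ : Ordinal.{0}) : EastonProdCond Q where
  comp α := if α < κ then p.comp α else q.comp α
  bounded := by
    obtain ⟨β₁, hβ₁⟩ := p.bounded
    obtain ⟨β₂, hβ₂⟩ := q.bounded
    refine ⟨max β₁ β₂, fun α hα => ?_⟩
    split_ifs
    · exact hβ₁ α (le_of_max_le_left hα)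
    · exact hβ₂ α (le_of_max_le_right hα)
  easton μ hμ := by
    let supp (r : EastonProdCond Q) : Set Ordinal.{0} := {α | α < μ.ord ∧ r.comp α ≠ ⊤}
    have hsub : {α | α < μ.ord ∧ (if α < κ then p.comp α else q.comp α) ≠ ⊤} ⊆
        supp p ∪ supp q := by
      intro α ⟨hαμ, hα⟩
      split_ifs at hα
      · exact Or.inl ⟨hαμ, hα⟩
      · exact Or.inr ⟨hαμ, hα⟩
    calc _ ≤ Cardinal.mk ↥(supp p ∪ supp q) := Cardinal.mk_le_mk_of_subset hsub
      _ ≤ Cardinal.mk (supp p) + Cardinal.mk (supp q) := Cardinal.mk_union_le _ _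
      _ < Cardinal.lift.{1} μ := Cardinal.add_lt_of_lt
          (Cardinal.aleph0_le_lift.mpr hμ.aleph0_le) (p.easton μ hμ) (q.easton μ hμ)

theorem glue_le_left {p q : EastonProdCond Q} {κ : Ordinal.{0}}
    (hp : ∀ α, κ ≤ α → p.comp α = ⊤) : glue p q κ ≤ p := by
  intro α
  change (if α < κ then p.comp α else q.comp α) ≤ p.comp α
  split_ifs with h
  · exact le_rfl
  · exact (hp α (not_lt.mp h)).symm ▸ le_top

theorem glue_le_right {p q : EastonProdCond Q} {κ : Ordinal.{0}}
    (hpq : ∀ α < κ, p.comp α ≤ q.comp α) : glue p q κ ≤ q := by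
  intro α
  change (if α < κ then p.comp α else q.comp α) ≤ q.comp α
  split_ifs with h
  · exact hpq α h
  · exact le_rfl

end EastonProdCond

theorem easton_product_ord_cc (hM : OrdIsMahlo) :
    ∀ A : Set (EastonProdCond Q),
      (∀ p ∈ A, ∀ q ∈ A, p ≠ q → ¬ ∃ r : EastonProdCond Q, r ≤ p ∧ r ≤ q) →
      Small.{0} A := by
  intro A hA
  by_contra hsmall
  obtain ⟨e⟩ := nonempty_ordinal_embedding_of_not_small A hsmall
  let p (ξ : Ordinal.{0}) : EastonProdCond Q := e ξ
  obtain ⟨γ, r, hr⟩ := hM.exists_code_unbounded (R := fun γ => ∀ a : Set.Iio γ, Q a)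
    (fun γ r κ => (∀ α, γ ≤ α → α < κ → (p κ).comp α = ⊤) ∧
      ∀ α (h : α < γ), (p κ).comp α = r ⟨α, h⟩)
    fun c hc =>
      let ⟨γ, hγ, hsupp⟩ := (p c.ord).exists_support_bound hc
      ⟨γ, hγ, fun a => (p c.ord).comp a, hsupp, fun _ _ => rfl⟩
  obtain ⟨κ₁, -, -, hcode₁⟩ := hr 0
  obtain ⟨β, hβ⟩ := (p κ₁).bounded
  obtain ⟨κ₂, hκ₂, hsupp₂, hcode₂⟩ := hr (max κ₁ β)
  have hne : p κ₁ ≠ p κ₂ := fun h =>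
    (lt_of_le_of_lt (le_max_left _ _) hκ₂).ne (e.injective (Subtype.ext h))
  refine hA _ (e κ₁).2 _ (e κ₂).2 hne ⟨(p κ₁).glue (p κ₂) κ₂, ?_, ?_⟩
  · exact EastonProdCond.glue_le_left fun α hα =>
      hβ α ((le_max_right _ _).trans (hκ₂.le.trans hα))
  refine EastonProdCond.glue_le_right fun α hα => ?_
  rcases lt_or_ge α γ with hαγ | hγα
  · rw [hcode₁ α hαγ, hcode₂ α hαγ]
  · exact (hsupp₂ α hγα hα).symm ▸ le_top
end
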